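/- arXiv:1301.4835 — 7 statements merged into one kernel-verified Lean document; each statement's English description precedes it below -/
import Mathlib

section
/- Let F : ℝ → ℝ be twice continuously differentiable and let C > 0 satisfy F(s) ≥ −C s² for all s ∈ ℝ. Then for every R > 0 there exists a constant C(R) > 0 such that for all u, w ∈ ℝ with |u| ≤ R one has F(u+w) − F(u) − F'(u)·w ≥ −C(R)·w². (Hypothesis (H21) implies estimate (H11).) -/
/-!
For `|w| ≤ 1` the first-order Taylor remainder at `u` is at most `K w²`, where `K` is a Lipschitz
constant of `F'` on `[-(R+1), R+1]` (mean value theorem for `x ↦ F x - F' u * x`). For `|w| ≥ 1`,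
(H21) gives `F (u + w) ≥ -2C(R² + 1) w²`, while `F u` and `F' u * w` are bounded on `|u| ≤ R` by
constants times `1 ≤ w²` and `|w| ≤ w²`.
-/

open NNReal Set

theorem abs_sub_sub_deriv_mul_le_of_lipschitzOnWith {F : ℝ → ℝ} {s : Set ℝ} {K : ℝ≥0}
    {u w : ℝ} (hs : Convex ℝ s) (hF : ∀ x ∈ s, DifferentiableAt ℝ F x)
    (hF' : LipschitzOnWith K (deriv F) s) (hu : u ∈ s) (huw : u + w ∈ s) :
    |F (u + w) - F u - deriv F u * w| ≤ K * w ^ 2 := by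
  have hseg : uIcc u (u + w) ⊆ s := hs.ordConnected.uIcc_subset hu huw
  have hderiv : ∀ x ∈ uIcc u (u + w), HasDerivWithinAt (fun y ↦ F y - deriv F u * y)
      (deriv F x - deriv F u) (uIcc u (u + w)) x := fun x hx ↦
    ((hF x (hseg hx)).hasDerivAt.sub ((hasDerivAt_id x).const_mul _)).hasDerivWithinAt.congr_deriv
      (by simp)
  have hbound : ∀ x ∈ uIcc u (u + w), ‖deriv F x - deriv F u‖ ≤ K * |w| := fun x hx ↦ by
    calc ‖deriv F x - deriv F u‖ ≤ K * dist x u := hF'.dist_le_mul x (hseg hx) u hu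
      _ ≤ K * |w| := by
        gcongr
        simpa [Real.dist_eq] using abs_sub_left_of_mem_uIcc hx
  have hmvt := Convex.norm_image_sub_le_of_norm_hasDerivWithin_le hderiv hbound (convex_uIcc _ _)
    left_mem_uIcc right_mem_uIcc
  simp only [Real.norm_eq_abs, add_sub_cancel_left] at hmvt
  calc |F (u + w) - F u - deriv F u * w|
      = |F (u + w) - deriv F u * (u + w) - (F u - deriv F u * u)| := by ring_nf
    _ ≤ K * |w| * |w| := hmvt
    _ = K * w ^ 2 := by rw [mul_assoc, ← sq, sq_abs]

theorem neg_mul_sq_le_sub_sub_mul_of_forall_neg_mul_sq_le {f : ℝ → ℝ} {C R A B d u w : ℝ}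
    (hC : 0 ≤ C) (hf : ∀ s, -C * s ^ 2 ≤ f s) (hu : |u| ≤ R) (hA : |f u| ≤ A) (hd : |d| ≤ B)
    (hw : 1 ≤ |w|) :
    -(2 * C * (R ^ 2 + 1) + A + B) * w ^ 2 ≤ f (u + w) - f u - d * w := by
  have habs_le_sq : |w| ≤ w ^ 2 := by nlinarith [sq_abs w]
  have huw : (u + w) ^ 2 ≤ 2 * (R ^ 2 + 1) * w ^ 2 := by
    nlinarith [sq_nonneg (u - w), sq_abs u, sq_abs w, abs_nonneg u]
  have hfu : f u ≤ A * w ^ 2 := by nlinarith [le_abs_self (f u), abs_nonneg (f u)]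
  have hdw : d * w ≤ B * w ^ 2 := by
    nlinarith [abs_mul d w, le_abs_self (d * w),
      mul_le_mul hd habs_le_sq (abs_nonneg w) ((abs_nonneg d).trans hd)]
  nlinarith [hf (u + w), mul_le_mul_of_nonneg_left huw hC]

/-- hypothesis (H21) implies estimate (H11). If `F` is `C²` and
`F s ≥ -C s²` for all `s`, then for every `R > 0` there is `C(R) > 0` such that
`F (u+w) - F u - F' u · w ≥ -C(R) w²` whenever `|u| ≤ R`. -/
theorem statement4 (F : ℝ → ℝ) (hF : ContDiff ℝ 2 F) (C : ℝ) (hC : 0 < C)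
    (hH21 : ∀ s : ℝ, F s ≥ -C * s ^ 2) :
    ∀ R : ℝ, 0 < R → ∃ CR : ℝ, 0 < CR ∧ ∀ u w : ℝ, |u| ≤ R →
      F (u + w) - F u - deriv F u * w ≥ -CR * w ^ 2 := by
  intro R hR
  have hF' : ContDiff ℝ 1 (deriv F) := (contDiff_succ_iff_deriv (n := 1)).mp hF |>.2.2
  obtain ⟨K, hK⟩ := hF'.locallyLipschitz.locallyLipschitzOn.exists_lipschitzOnWith_of_compact
    (isCompact_Icc (a := -(R + 1)) (b := R + 1))
  obtain ⟨A, hA⟩ := (isCompact_Icc (a := -R) (b := R)).exists_bound_of_continuousOn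
    hF.continuous.continuousOn
  obtain ⟨B, hB⟩ := (isCompact_Icc (a := -R) (b := R)).exists_bound_of_continuousOn
    hF'.continuous.continuousOn
  have hR0 : (0 : ℝ) ∈ Icc (-R) R := ⟨by linarith, hR.le⟩
  have hA0 : 0 ≤ A := (norm_nonneg _).trans (hA 0 hR0)
  have hB0 : 0 ≤ B := (norm_nonneg _).trans (hB 0 hR0)
  refine ⟨K + 2 * C * (R ^ 2 + 1) + A + B, by positivity, fun u w hu ↦ ?_⟩
  have hu' : u ∈ Icc (-R) R := abs_le.mp hu
  rcases le_total |w| 1 with hw | hw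
  · obtain ⟨hw₁, hw₂⟩ := abs_le.mp hw
    have htaylor := abs_sub_sub_deriv_mul_le_of_lipschitzOnWith (convex_Icc _ _)
      (fun x _ ↦ hF.differentiable (by norm_num) x) hK (u := u) (w := w)
      ⟨by linarith [hu'.1], by linarith [hu'.2]⟩ ⟨by linarith [hu'.1], by linarith [hu'.2]⟩
    nlinarith [neg_abs_le (F (u + w) - F u - deriv F u * w),
      mul_nonneg (by positivity : 0 ≤ 2 * C * (R ^ 2 + 1) + A + B) (sq_nonneg w)]
  · have hlarge := neg_mul_sq_le_sub_sub_mul_of_forall_neg_mul_sq_le hC.le (fun s ↦ hH21 s) hu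
      (hA u hu') (hB u hu') hw
    nlinarith [mul_nonneg K.2 (sq_nonneg w)]
end

section
/- Let f : ℝ → ℝ be twice continuously differentiable with s·f(s) ≥ 0 for all s ∈ ℝ. Then for every R > 0 and M > 0 there exists a constant C > 0 (depending only on f, R, M) such that for all u, w, p ∈ ℝ with |u| ≤ R and |p| ≤ M one has ( f(u) + f'(u)·w − f(u+w) )·p ≤ C·w² + M·w·( f(u+w) − f(u) ). -/
/-!
For `|w| ≤ R + 1` both `u` and `u + w` stay in a fixed compact interval, on which `f'` and
`f''` are bounded; Taylor's bound `|f u + f' u w - f (u+w)| ≤ K w²` and the Lipschitz bound `|w (f (u+w) - f u)| ≤ A w²` give the claim. For `|w| > R + 1`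
the point `u + w` has the sign of `w`, so the defocusing condition gives `w f(u+w) ≥ 0`; since
`|w| ≥ 1`, the uncontrolled term `-f(u+w) p` is absorbed by `M w f(u+w)`, and the terms
involving only `f u`, `f' u` are `O(w²)`.
-/

open Set

lemma mul_le_of_abs_le_of_abs_le {a b α β : ℝ} (ha : |a| ≤ α) (hb : |b| ≤ β) :
    a * b ≤ α * β :=
  calc a * b ≤ |a| * |b| := by rw [← abs_mul]; exact le_abs_self _
    _ ≤ α * β := mul_le_mul ha hb (abs_nonneg _) ((abs_nonneg a).trans ha)

lemma IsCompact.exists_pos_abs_bound {s : Set ℝ} (hs : IsCompact s) {g : ℝ → ℝ}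
    (hg : Continuous g) : ∃ B > 0, ∀ x ∈ s, |g x| ≤ B := by
  obtain ⟨B, hB⟩ := hs.exists_bound_of_continuousOn hg.continuousOn
  exact ⟨max B 1, by positivity, fun x hx => (hB x hx).trans (le_max_left _ _)⟩

section

variable {f : ℝ → ℝ} {s : Set ℝ} {A K : ℝ}

lemma Convex.abs_sub_sub_deriv_mul_le (hs : Convex ℝ s) (hf : Differentiable ℝ f)
    (hf' : Differentiable ℝ (deriv f)) (hK : ∀ x ∈ s, |deriv (deriv f) x| ≤ K)
    {x y : ℝ} (hx : x ∈ s) (hy : y ∈ s) :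
    |f y - f x - deriv f x * (y - x)| ≤ K * (y - x) ^ 2 := by
  have hK0 : 0 ≤ K := (abs_nonneg _).trans (hK x hx)
  have hsub : uIcc x y ⊆ s := hs.ordConnected.uIcc_subset hx hy
  have hderiv : ∀ z, HasDerivAt (fun z => f z - deriv f x * z) (deriv f z - deriv f x) z :=
    fun z => by
      have := (hf z).hasDerivAt.sub ((hasDerivAt_id' z).const_mul (deriv f x))
      rwa [mul_one] at this
  have hbound : ∀ z ∈ uIcc x y, |deriv (fun z => f z - deriv f x * z) z| ≤ K * |y - x| := by
    intro z hz
    rw [(hderiv z).deriv]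
    calc |deriv f z - deriv f x|
        ≤ K * |z - x| := hs.norm_image_sub_le_of_norm_deriv_le (fun t _ => hf' t) hK hx (hsub hz)
      _ ≤ K * |y - x| := mul_le_mul_of_nonneg_left (abs_sub_left_of_mem_uIcc hz) hK0
  have := (convex_uIcc x y).norm_image_sub_le_of_norm_deriv_le
    (fun z _ => (hderiv z).differentiableAt) hbound left_mem_uIcc right_mem_uIcc
  calc |f y - f x - deriv f x * (y - x)|
      = |(f y - deriv f x * y) - (f x - deriv f x * x)| := by ring_nf
    _ ≤ K * |y - x| * |y - x| := this
    _ = K * (y - x) ^ 2 := by rw [mul_assoc, abs_mul_abs_self, sq]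

lemma remainder_mul_le_of_mem_convex (hs : Convex ℝ s) (hf : Differentiable ℝ f)
    (hf' : Differentiable ℝ (deriv f)) (hA : ∀ x ∈ s, |deriv f x| ≤ A)
    (hK : ∀ x ∈ s, |deriv (deriv f) x| ≤ K) {u w p M : ℝ} (hu : u ∈ s) (huw : u + w ∈ s)
    (hp : |p| ≤ M) :
    (f u + deriv f u * w - f (u + w)) * p
      ≤ M * (K + A) * w ^ 2 + M * (w * (f (u + w) - f u)) := by
  have htaylor : |f u + deriv f u * w - f (u + w)| ≤ K * w ^ 2 := by
    have := hs.abs_sub_sub_deriv_mul_le hf hf' hK hu huw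
    rwa [add_sub_cancel_left, ← abs_neg, show -(f (u + w) - f u - deriv f u * w) =
      f u + deriv f u * w - f (u + w) by ring] at this
  have hlip : |w * (f (u + w) - f u)| ≤ A * w ^ 2 := by
    have := hs.norm_image_sub_le_of_norm_deriv_le (fun z _ => hf z) hA hu huw
    rw [add_sub_cancel_left] at this
    calc |w * (f (u + w) - f u)| = |w| * |f (u + w) - f u| := abs_mul _ _
      _ ≤ |w| * (A * |w|) := mul_le_mul_of_nonneg_left this (abs_nonneg w)
      _ = A * w ^ 2 := by rw [mul_left_comm, abs_mul_abs_self, sq]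
  have hM : 0 ≤ M := (abs_nonneg p).trans hp
  linarith [mul_le_of_abs_le_of_abs_le htaylor hp,
    mul_le_mul_of_nonneg_left (neg_le_of_abs_le hlip) hM]

lemma mul_apply_add_nonneg (hsign : ∀ s : ℝ, s * f s ≥ 0) {u w : ℝ} (huw : |u| < |w|) :
    0 ≤ w * f (u + w) := by
  have hsame : 0 < (u + w) * w := by
    nlinarith [abs_mul_abs_self w, abs_mul_abs_self u, abs_mul u w, neg_abs_le (u * w),
      abs_nonneg u]
  refine nonneg_of_mul_nonneg_left ?_ hsame
  calc 0 ≤ w ^ 2 * ((u + w) * f (u + w)) := mul_nonneg (sq_nonneg w) (hsign _)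
    _ = w * f (u + w) * ((u + w) * w) := by ring

lemma remainder_mul_le_of_abs_lt (hsign : ∀ s : ℝ, s * f s ≥ 0) {u w p M B : ℝ}
    (hfu : |f u| ≤ B) (hf'u : |deriv f u| ≤ A) (hp : |p| ≤ M) (huw : |u| < |w|)
    (hw : 1 ≤ |w|) :
    (f u + deriv f u * w - f (u + w)) * p
      ≤ M * (A + 2 * B) * w ^ 2 + M * (w * (f (u + w) - f u)) := by
  have hwsq : |w| ≤ w ^ 2 := by nlinarith [sq_abs w]
  have hB : 0 ≤ B := (abs_nonneg _).trans hfu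
  have hA : 0 ≤ A := (abs_nonneg _).trans hf'u
  have hfar : |-f (u + w)| ≤ w * f (u + w) := by
    rw [abs_neg, ← abs_of_nonneg (mul_apply_add_nonneg hsign huw), abs_mul]
    exact le_mul_of_one_le_left (abs_nonneg _) hw
  have hfuw : |f u| ≤ B * w ^ 2 := hfu.trans (le_mul_of_one_le_right hB (hw.trans hwsq))
  have hf'uw : |deriv f u * w| ≤ A * w ^ 2 := by
    rw [abs_mul]; exact mul_le_mul hf'u hwsq (abs_nonneg _) hA
  have hwfu : |w * f u| ≤ B * w ^ 2 := by
    rw [abs_mul, mul_comm]; exact mul_le_mul hfu hwsq (abs_nonneg _) hB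
  have hM : 0 ≤ M := (abs_nonneg p).trans hp
  linarith [mul_le_of_abs_le_of_abs_le hfar hp, mul_le_of_abs_le_of_abs_le hfuw hp,
    mul_le_of_abs_le_of_abs_le hf'uw hp, mul_le_mul_of_nonneg_left (le_of_abs_le hwfu) hM]

end

/-- pointwise form of Lemma 2.6. If `f` is `C²` with `s · f s ≥ 0` for all
`s`, then for every `R > 0` and `M > 0` there is `C > 0` such that for all `u, w, p` with
`|u| ≤ R` and `|p| ≤ M` one has
`(f u + f' u · w - f (u + w)) · p ≤ C w² + M · w · (f (u + w) - f u)`. -/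
theorem statement7 (f : ℝ → ℝ) (hf : ContDiff ℝ 2 f) (hsign : ∀ s : ℝ, s * f s ≥ 0) :
    ∀ R M : ℝ, 0 < R → 0 < M → ∃ C : ℝ, 0 < C ∧ ∀ u w p : ℝ, |u| ≤ R → |p| ≤ M →
      (f u + deriv f u * w - f (u + w)) * p
        ≤ C * w ^ 2 + M * (w * (f (u + w) - f u)) := by
  intro R M _ hM
  have hf' : Differentiable ℝ (deriv f) := hf.differentiable_deriv_two
  set I := Icc (-(2 * R + 1)) (2 * R + 1)
  have hI : IsCompact I := isCompact_Icc
  obtain ⟨B, hB, hfB⟩ := hI.exists_pos_abs_bound hf.continuous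
  obtain ⟨A, hA, hf'A⟩ := hI.exists_pos_abs_bound hf'.continuous
  obtain ⟨K, hK, hf''K⟩ := hI.exists_pos_abs_bound (hf.iterate_deriv' 0 2).continuous
  refine ⟨M * (K + A + 2 * B), by positivity, fun u w p hu hp => ?_⟩
  have huI : u ∈ I := by constructor <;> linarith [abs_le.mp hu]
  have hMBw : 0 ≤ M * B * w ^ 2 := by positivity
  have hMKw : 0 ≤ M * K * w ^ 2 := by positivity
  rcases le_or_gt |w| (R + 1) with hw | hw
  · have huwI : u + w ∈ I := by constructor <;> linarith [abs_le.mp hu, abs_le.mp hw]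
    have := remainder_mul_le_of_mem_convex (convex_Icc _ _) (hf.differentiable two_ne_zero) hf'
      hf'A hf''K huI huwI hp
    linarith
  · have := remainder_mul_le_of_abs_lt hsign (hfB u huI) (hf'A u huI) hp
      (by linarith) (by linarith)
    linarith
end

section
/- Let F : [0,∞) → ℝ be twice continuously differentiable and let C > 0 satisfy F(|z|²/2) ≥ −C|z|² for all z ∈ ℂ. Define f(z) = z·F'(|z|²/2). Then for every R > 0 there exists a constant C(R) > 0 such that for all u, w ∈ ℂ with |u| ≤ R one has F(|u+w|²/2) − F(|u|²/2) − Re( f(u)·conj(w) ) ≥ −C(R)·|w|². -/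
/-!
Write `a = |u|²/2`, `b = |u+w|²/2` and `p = Re (u · conj w)`, so that `b - a = p + |w|²/2` and
`Re (f u · conj w) = F'(a) p`. For `|w| ≤ R` both `a` and `b` lie in `[0, 2R²]`, where `F'` is
Lipschitz, so the second-order Taylor remainder of `F` between `a` and `b` is `O((b-a)²)` and
`|b - a| ≤ 2R|w|`. For `|w| ≥ R` no smoothness is needed: the lower bound on `F` gives
`F(b) ≥ -4C|w|²`, while `F(a)` and `F'(a) p` are bounded by multiples of `R²` and `R|w|`,
hence by multiples of `|w|²`.
-/

open Complex Set NNReal Interval ComplexConjugate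

theorem abs_sub_sub_mul_le_of_lipschitzOnWith_deriv {f f' : ℝ → ℝ} {s : Set ℝ} {L : ℝ≥0}
    (hs : s.OrdConnected) (hf : ∀ x ∈ s, HasDerivWithinAt f (f' x) s x)
    (hf' : LipschitzOnWith L f' s) {a b : ℝ} (ha : a ∈ s) (hb : b ∈ s) :
    |f b - f a - f' a * (b - a)| ≤ L * (b - a) ^ 2 := by
  have hab : [[a, b]] ⊆ s := hs.uIcc_subset ha hb
  have hderiv : ∀ x ∈ [[a, b]],
      HasDerivWithinAt (fun y ↦ f y - f' a * y) (f' x - f' a) [[a, b]] x := fun x hx ↦ by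
    simpa using ((hf x (hab hx)).mono hab).fun_sub ((hasDerivWithinAt_id x _).const_mul (f' a))
  have hbound : ∀ x ∈ [[a, b]], ‖f' x - f' a‖ ≤ L * |b - a| := fun x hx ↦
    calc ‖f' x - f' a‖ ≤ L * |x - a| := hf'.dist_le_mul x (hab hx) a ha
      _ ≤ L * |b - a| := mul_le_mul_of_nonneg_left (abs_sub_left_of_mem_uIcc hx) L.2
  have := (convex_uIcc a b).norm_image_sub_le_of_norm_hasDerivWithin_le hderiv hbound
    left_mem_uIcc right_mem_uIcc
  rw [Real.norm_eq_abs, Real.norm_eq_abs] at this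
  calc |f b - f a - f' a * (b - a)| = |f b - f' a * b - (f a - f' a * a)| := by ring_nf
    _ ≤ L * |b - a| * |b - a| := this
    _ = L * (b - a) ^ 2 := by rw [mul_assoc, abs_mul_abs_self, sq]

theorem ContDiffOn.exists_abs_sub_sub_derivWithin_mul_le {F : ℝ → ℝ} {s t : Set ℝ}
    (hF : ContDiffOn ℝ 2 F s) (hs : UniqueDiffOn ℝ s) (hts : t ⊆ s) (ht : Convex ℝ t)
    (ht' : IsCompact t) :
    ∃ L : ℝ≥0, ∀ a ∈ t, ∀ b ∈ t,
      |F b - F a - derivWithin F s a * (b - a)| ≤ L * (b - a) ^ 2 := by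
  obtain ⟨L, hL⟩ := ((hF.derivWithin hs (by norm_num)).mono hts).exists_lipschitzOnWith
    one_ne_zero ht ht'
  refine ⟨L, fun a ha b hb ↦ abs_sub_sub_mul_le_of_lipschitzOnWith_deriv ht.ordConnected
    (fun x hx ↦ ?_) hL ha hb⟩
  exact ((hF.differentiableOn (by norm_num) x (hts hx)).hasDerivWithinAt).mono hts

namespace Complex

theorem sq_norm_add_eq (u w : ℂ) : ‖u + w‖ ^ 2 = ‖u‖ ^ 2 + 2 * (u * conj w).re + ‖w‖ ^ 2 := by
  simp only [Complex.sq_norm, normSq_add]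
  ring

theorem abs_re_mul_conj_le (u w : ℂ) : |(u * conj w).re| ≤ ‖u‖ * ‖w‖ := by
  simpa using abs_re_le_norm (u * conj w)

end Complex

section QuadraticRemainder

noncomputable def quadraticRemainder (F F' : ℝ → ℝ) (u w : ℂ) : ℝ :=
  F (‖u + w‖ ^ 2 / 2) - F (‖u‖ ^ 2 / 2) - F' (‖u‖ ^ 2 / 2) * (u * conj w).re

variable {F F' : ℝ → ℝ} {R : ℝ} {u w : ℂ}

theorem neg_mul_sq_le_quadraticRemainder_of_norm_le {L : ℝ≥0} {M' : ℝ}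
    (hTaylor : ∀ a ∈ Icc 0 (2 * R ^ 2), ∀ b ∈ Icc 0 (2 * R ^ 2),
      |F b - F a - F' a * (b - a)| ≤ L * (b - a) ^ 2)
    (hF' : |F' (‖u‖ ^ 2 / 2)| ≤ M') (hu : ‖u‖ ≤ R) (hw : ‖w‖ ≤ R) :
    -(4 * L * R ^ 2 + M') * ‖w‖ ^ 2 ≤ quadraticRemainder F F' u w := by
  rw [quadraticRemainder]
  set p := (u * conj w).re
  have hp := abs_le.mp
    ((abs_re_mul_conj_le u w).trans (mul_le_mul_of_nonneg_right hu (norm_nonneg w)))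
  have hsum := norm_add_le u w
  have hexp := sq_norm_add_eq u w
  have hw0 := norm_nonneg w
  have ha : ‖u‖ ^ 2 / 2 ∈ Icc 0 (2 * R ^ 2) := ⟨by positivity, by nlinarith [norm_nonneg u]⟩
  have hb : ‖u + w‖ ^ 2 / 2 ∈ Icc 0 (2 * R ^ 2) :=
    ⟨by positivity, by nlinarith [norm_nonneg (u + w)]⟩
  have hba : |‖u + w‖ ^ 2 / 2 - ‖u‖ ^ 2 / 2| ≤ 2 * R * ‖w‖ := by
    rw [abs_le]; constructor <;> nlinarith
  have hrem := abs_le.mp (hTaylor _ ha _ hb)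
  have hsq : (‖u + w‖ ^ 2 / 2 - ‖u‖ ^ 2 / 2) ^ 2 ≤ 4 * R ^ 2 * ‖w‖ ^ 2 := by
    rw [← sq_abs]; nlinarith [abs_nonneg (‖u + w‖ ^ 2 / 2 - ‖u‖ ^ 2 / 2)]
  have hM' := abs_le.mp hF'
  have hdiff : ‖u + w‖ ^ 2 / 2 - ‖u‖ ^ 2 / 2 = p + ‖w‖ ^ 2 / 2 := by rw [hexp]; ring
  rw [hdiff] at hrem hsq
  nlinarith [mul_le_mul_of_nonneg_left hsq L.2, sq_nonneg ‖w‖]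

theorem neg_mul_sq_le_quadraticRemainder_of_le_norm {C M M' : ℝ}
    (hlow : ∀ z : ℂ, F (‖z‖ ^ 2 / 2) ≥ -C * ‖z‖ ^ 2) (hC : 0 ≤ C)
    (hF : |F (‖u‖ ^ 2 / 2)| ≤ M) (hF' : |F' (‖u‖ ^ 2 / 2)| ≤ M')
    (hR : 0 < R) (hu : ‖u‖ ≤ R) (hw : R ≤ ‖w‖) :
    -(4 * C + M / R ^ 2 + M') * ‖w‖ ^ 2 ≤ quadraticRemainder F F' u w := by
  rw [quadraticRemainder]
  have hu0 := norm_nonneg u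
  have hsum : ‖u + w‖ ^ 2 ≤ 4 * ‖w‖ ^ 2 := by nlinarith [norm_add_le u w, norm_nonneg (u + w)]
  have hFb : -(4 * C) * ‖w‖ ^ 2 ≤ F (‖u + w‖ ^ 2 / 2) := by nlinarith [hlow (u + w)]
  have hFa : F (‖u‖ ^ 2 / 2) ≤ M / R ^ 2 * ‖w‖ ^ 2 := by
    have hM : 0 ≤ M := (abs_nonneg _).trans hF
    calc F (‖u‖ ^ 2 / 2) ≤ M := (abs_le.mp hF).2
      _ = M / R ^ 2 * R ^ 2 := by field_simp
      _ ≤ M / R ^ 2 * ‖w‖ ^ 2 := by gcongr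
  have hF'p : |F' (‖u‖ ^ 2 / 2) * (u * conj w).re| ≤ M' * ‖w‖ ^ 2 := by
    have hp : |(u * conj w).re| ≤ ‖w‖ * ‖w‖ :=
      (abs_re_mul_conj_le u w).trans (by gcongr; linarith)
    rw [abs_mul, pow_two ‖w‖]
    exact mul_le_mul hF' hp (abs_nonneg _) ((abs_nonneg _).trans hF')
  linarith [(abs_le.mp hF'p).2]

end QuadraticRemainder

/-- complex analogue of estimate (H11). If `F : [0,∞) → ℝ` is `C²` and
`F(|z|²/2) ≥ -C|z|²` for all `z ∈ ℂ`, then for the nonlinearity `f z = z · F'(|z|²/2)`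
and every `R > 0` there is `C(R) > 0` such that whenever `|u| ≤ R`,
`F(|u+w|²/2) - F(|u|²/2) - Re (f u · conj w) ≥ -C(R) |w|²`.
(The derivative of `F` on `[0,∞)` is formalized as `derivWithin F (Set.Ici 0)`.) -/
theorem statement13 (F : ℝ → ℝ) (hF : ContDiffOn ℝ 2 F (Set.Ici 0))
    (C : ℝ) (hC : 0 < C)
    (hlow : ∀ z : ℂ, F (‖z‖ ^ 2 / 2) ≥ -C * ‖z‖ ^ 2)
    (f : ℂ → ℂ)
    (hf : ∀ z : ℂ, f z = z * ((derivWithin F (Set.Ici 0) (‖z‖ ^ 2 / 2) : ℝ) : ℂ)) :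
    ∀ R : ℝ, 0 < R → ∃ CR : ℝ, 0 < CR ∧ ∀ u w : ℂ, ‖u‖ ≤ R →
      F (‖u + w‖ ^ 2 / 2) - F (‖u‖ ^ 2 / 2) - (f u * (starRingEnd ℂ) w).re
        ≥ -CR * ‖w‖ ^ 2 := by
  intro R hR
  have hK : Icc 0 (2 * R ^ 2) ⊆ Ici 0 := Icc_subset_Ici_self
  obtain ⟨L, hL⟩ := hF.exists_abs_sub_sub_derivWithin_mul_le (uniqueDiffOn_Ici 0) hK
    (convex_Icc _ _) isCompact_Icc
  obtain ⟨M, hM⟩ := isCompact_Icc.exists_bound_of_continuousOn (hF.continuousOn.mono hK)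
  obtain ⟨M', hM'⟩ := isCompact_Icc.exists_bound_of_continuousOn
    ((hF.continuousOn_derivWithin (uniqueDiffOn_Ici 0) (by norm_num)).mono hK)
  set A := 4 * L * R ^ 2 + M'
  set B := 4 * C + M / R ^ 2 + M'
  refine ⟨max (max A B) 1, by positivity, fun u w hu ↦ ?_⟩
  have ha : ‖u‖ ^ 2 / 2 ∈ Icc 0 (2 * R ^ 2) := ⟨by positivity, by nlinarith [norm_nonneg u]⟩
  have hre : (f u * conj w).re = derivWithin F (Ici 0) (‖u‖ ^ 2 / 2) * (u * conj w).re := by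
    rw [hf, mul_right_comm, re_mul_ofReal, mul_comm]
  have hbound : -max A B * ‖w‖ ^ 2 ≤ quadraticRemainder F (derivWithin F (Ici 0)) u w := by
    rcases le_total ‖w‖ R with hw | hw
    · refine le_trans ?_ (neg_mul_sq_le_quadraticRemainder_of_norm_le hL (hM' _ ha) hu hw)
      gcongr; exact le_max_left A B
    · refine le_trans ?_ (neg_mul_sq_le_quadraticRemainder_of_le_norm hlow hC.le
        (hM _ ha) (hM' _ ha) hR hu hw)
      gcongr; exact le_max_right A B
  rw [quadraticRemainder, ← hre] at hbound
  nlinarith [le_max_left (max A B) 1, sq_nonneg ‖w‖]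
end

section
/- Let d ≥ 3 and set 2* = 2d/(d−2). Let F : [0,∞) → ℝ be smooth, define f(z) = z·F'(|z|²/2) for z ∈ ℂ (a smooth map ℝ² → ℝ²), and assume there exist C > 0 and q with 1 ≤ q < 2* such that |f(z)| ≤ C|z|^q for all z ∈ ℂ. Then for every R > 0 there exists a constant C(R) > 0 such that for all u, w ∈ ℂ with |u| ≤ R one has |f(u+w) − f(u) − Df(u)w| ≤ C(R)·( |w|² + |w|^{2*} ), where Df(u) denotes the real Fréchet derivative of f at u (an ℝ-linear map ℂ → ℂ). -/
open Complex

/-- estimate (3.13), the complex analogue of (H22). Let `d ≥ 3`,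
`2* = 2d/(d-2)`, let `F : [0,∞) → ℝ` be smooth, and let `f z = z · F'(|z|²/2)` satisfy
`|f z| ≤ C |z|^q` for some `C > 0` and `1 ≤ q < 2*`. Then for every `R > 0` there is
`C(R) > 0` such that whenever `|u| ≤ R`,
`|f(u+w) - f u - Df(u) w| ≤ C(R) (|w|² + |w|^{2*})`,
where `Df(u) = fderiv ℝ f u` is the real Fréchet derivative of `f` at `u`. -/
theorem statement14 (d : ℕ) (hd : 3 ≤ d) (twoStar : ℝ)
    (htwoStar : twoStar = 2 * (d : ℝ) / ((d : ℝ) - 2))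
    (F : ℝ → ℝ) (hF : ContDiffOn ℝ (⊤ : ℕ∞) F (Set.Ici 0))
    (f : ℂ → ℂ)
    (hf : ∀ z : ℂ, f z = z * ((derivWithin F (Set.Ici 0) (‖z‖ ^ 2 / 2) : ℝ) : ℂ))
    (C q : ℝ) (hC : 0 < C) (hq1 : 1 ≤ q) (hq2 : q < twoStar)
    (hgrowth : ∀ z : ℂ, ‖f z‖ ≤ C * ‖z‖ ^ q) :
    ∀ R : ℝ, 0 < R → ∃ CR : ℝ, 0 < CR ∧ ∀ u w : ℂ, ‖u‖ ≤ R →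
      ‖f (u + w) - f u - fderiv ℝ f u w‖ ≤ CR * (‖w‖ ^ 2 + ‖w‖ ^ twoStar) := by
  -- basic facts about the exponents
  have hd3 : (3 : ℝ) ≤ (d : ℝ) := by exact_mod_cast hd
  have hts2 : (2 : ℝ) < twoStar := by
    rw [htwoStar, lt_div_iff₀ (by linarith)]; linarith
  have hq0 : (0 : ℝ) ≤ q := by linarith
  -- f is smooth
  have hF' : ContDiffOn ℝ (⊤ : ℕ∞) (derivWithin F (Set.Ici 0)) (Set.Ici 0) :=
    hF.derivWithin (uniqueDiffOn_Ici 0) (by simp)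
  have hg : ContDiff ℝ (⊤ : ℕ∞) fun z : ℂ => ‖z‖ ^ 2 / 2 := (contDiff_norm_sq ℝ).div_const 2
  have hcomp : ContDiff ℝ (⊤ : ℕ∞) fun z : ℂ => derivWithin F (Set.Ici 0) (‖z‖ ^ 2 / 2) := by
    rw [← contDiffOn_univ]
    exact hF'.comp hg.contDiffOn (fun z _ => Set.mem_Ici.mpr (by positivity))
  have hfs : ContDiff ℝ (⊤ : ℕ∞) f := by
    have hfe : f = fun z => z * ((derivWithin F (Set.Ici 0) (‖z‖ ^ 2 / 2) : ℝ) : ℂ) :=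
      funext hf
    rw [hfe]
    exact contDiff_id.mul (Complex.ofRealCLM.contDiff.comp hcomp)
  have hdiff : Differentiable ℝ f := hfs.differentiable (by simp)
  have hdf : ContDiff ℝ (⊤ : ℕ∞) (fderiv ℝ f) := hfs.fderiv_right (by simp)
  have hdf_diff : Differentiable ℝ (fderiv ℝ f) := hdf.differentiable (by simp)
  have hdf2cont : Continuous (fderiv ℝ (fderiv ℝ f)) :=
    (hdf.fderiv_right (m := (⊤ : ℕ∞)) (by simp)).continuous
  intro R hR
  -- bound on the second derivative on the ball of radius R+1
  obtain ⟨K, hK⟩ := (isCompact_closedBall (0 : ℂ) (R + 1)).exists_bound_of_continuousOn (f := fderiv ℝ (fderiv ℝ f))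
    hdf2cont.continuousOn
  have hK0 : 0 ≤ K :=
    le_trans (norm_nonneg _) (hK 0 (Metric.mem_closedBall_self (by linarith)))
  -- Lipschitz estimate for fderiv f on that ball
  have hlip : ∀ x ∈ Metric.closedBall (0 : ℂ) (R + 1), ∀ y ∈ Metric.closedBall (0 : ℂ) (R + 1),
      ‖fderiv ℝ f y - fderiv ℝ f x‖ ≤ K * ‖y - x‖ := fun x hx y hy =>
    (convex_closedBall _ _).norm_image_sub_le_of_norm_fderiv_le
      (fun z _ => hdf_diff z) (fun z hz => hK z hz) hx hy
  -- bound on the first derivative on the ball of radius R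
  obtain ⟨M, hM⟩ := (isCompact_closedBall (0 : ℂ) R).exists_bound_of_continuousOn
    hdf.continuous.continuousOn
  have hM0 : 0 ≤ M :=
    le_trans (norm_nonneg _) (hM 0 (Metric.mem_closedBall_self hR.le))
  refine ⟨K + C * (R + 1) ^ q + C * R ^ q + M + 1, by positivity, fun u w hu => ?_⟩
  set CR : ℝ := K + C * (R + 1) ^ q + C * R ^ q + M + 1 with hCR
  have hRq : (0 : ℝ) < C * (R + 1) ^ q := by positivity
  have hRq' : (0 : ℝ) < C * R ^ q := by positivity
  have hCRge : K ≤ CR := by nlinarith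
  have hwts0 : (0 : ℝ) ≤ ‖w‖ ^ twoStar := Real.rpow_nonneg (norm_nonneg _) _
  rcases le_or_gt ‖w‖ 1 with hw | hw
  · -- small w : second-order Taylor estimate
    have hsub : Metric.closedBall u ‖w‖ ⊆ Metric.closedBall (0 : ℂ) (R + 1) := by
      intro x hx
      simp only [Metric.mem_closedBall, dist_eq_norm] at hx ⊢
      calc ‖x - 0‖ = ‖(x - u) + u‖ := by ring_nf
        _ ≤ ‖x - u‖ + ‖u‖ := norm_add_le _ _
        _ ≤ R + 1 := by linarith
    have hbound : ∀ x ∈ Metric.closedBall u ‖w‖,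
        ‖fderiv ℝ f x - fderiv ℝ f u‖ ≤ K * ‖w‖ := by
      intro x hx
      have hxu : ‖x - u‖ ≤ ‖w‖ := by
        simpa [dist_eq_norm] using hx
      have h1 := hlip u (hsub (Metric.mem_closedBall_self (norm_nonneg _))) x (hsub hx)
      calc ‖fderiv ℝ f x - fderiv ℝ f u‖ ≤ K * ‖x - u‖ := h1
        _ ≤ K * ‖w‖ := mul_le_mul_of_nonneg_left hxu hK0
    have key := (convex_closedBall u ‖w‖).norm_image_sub_le_of_norm_hasFDerivWithin_le
      (f := fun x => f x - fderiv ℝ f u x)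
      (f' := fun x => fderiv ℝ f x - fderiv ℝ f u)
      (fun x _ => (((hdiff x).hasFDerivAt).sub ((fderiv ℝ f u).hasFDerivAt)).hasFDerivWithinAt)
      hbound (Metric.mem_closedBall_self (norm_nonneg _))
      (show u + w ∈ Metric.closedBall u ‖w‖ by
        simp [Metric.mem_closedBall, dist_eq_norm])
    have heq : (f (u + w) - fderiv ℝ f u (u + w)) - (f u - fderiv ℝ f u u)
        = f (u + w) - f u - fderiv ℝ f u w := by
      rw [map_add]; ring
    rw [heq] at key
    have hwe : ‖u + w - u‖ = ‖w‖ := by ring_nf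
    rw [hwe] at key
    calc ‖f (u + w) - f u - fderiv ℝ f u w‖ ≤ K * ‖w‖ * ‖w‖ := key
      _ = K * ‖w‖ ^ 2 := by ring
      _ ≤ CR * ‖w‖ ^ 2 := mul_le_mul_of_nonneg_right hCRge (by positivity)
      _ ≤ CR * (‖w‖ ^ 2 + ‖w‖ ^ twoStar) := by nlinarith
  · -- large w : use the growth bound
    have hw1 : (1 : ℝ) ≤ ‖w‖ := hw.le
    have hwts1 : (1 : ℝ) ≤ ‖w‖ ^ twoStar := by
      rw [show (1 : ℝ) = ‖w‖ ^ (0 : ℝ) from (Real.rpow_zero _).symm]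
      exact Real.rpow_le_rpow_of_exponent_le hw1 (by linarith)
    have hA : ‖f (u + w)‖ ≤ C * (R + 1) ^ q * ‖w‖ ^ twoStar := by
      have h1 : ‖u + w‖ ≤ (R + 1) * ‖w‖ := by
        calc ‖u + w‖ ≤ ‖u‖ + ‖w‖ := norm_add_le _ _
          _ ≤ (R + 1) * ‖w‖ := by nlinarith
      calc ‖f (u + w)‖ ≤ C * ‖u + w‖ ^ q := hgrowth _
        _ ≤ C * ((R + 1) * ‖w‖) ^ q := by
            exact mul_le_mul_of_nonneg_left
              (Real.rpow_le_rpow (norm_nonneg _) h1 hq0) hC.le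
        _ = C * ((R + 1) ^ q * ‖w‖ ^ q) := by
            rw [Real.mul_rpow (by linarith) (norm_nonneg _)]
        _ ≤ C * ((R + 1) ^ q * ‖w‖ ^ twoStar) := by
            exact mul_le_mul_of_nonneg_left
              (mul_le_mul_of_nonneg_left
                (Real.rpow_le_rpow_of_exponent_le hw1 hq2.le)
                (Real.rpow_nonneg (by linarith) _)) hC.le
        _ = C * (R + 1) ^ q * ‖w‖ ^ twoStar := by ring
    have hB : ‖f u‖ ≤ C * R ^ q * ‖w‖ ^ twoStar := by
      have h1 : ‖f u‖ ≤ C * R ^ q :=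
        le_trans (hgrowth u) (mul_le_mul_of_nonneg_left
          (Real.rpow_le_rpow (norm_nonneg _) hu hq0) hC.le)
      calc ‖f u‖ ≤ C * R ^ q := h1
        _ = C * R ^ q * 1 := by ring
        _ ≤ C * R ^ q * ‖w‖ ^ twoStar := mul_le_mul_of_nonneg_left hwts1 hRq'.le
    have hD : ‖fderiv ℝ f u w‖ ≤ M * ‖w‖ ^ twoStar := by
      have h1 : ‖fderiv ℝ f u‖ ≤ M := hM u (by
        simpa [Metric.mem_closedBall, dist_eq_norm] using hu)
      have h2 : ‖w‖ ≤ ‖w‖ ^ twoStar := by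
        calc ‖w‖ = ‖w‖ ^ (1 : ℝ) := (Real.rpow_one _).symm
          _ ≤ ‖w‖ ^ twoStar := Real.rpow_le_rpow_of_exponent_le hw1 (by linarith)
      calc ‖fderiv ℝ f u w‖ ≤ ‖fderiv ℝ f u‖ * ‖w‖ := (fderiv ℝ f u).le_opNorm w
        _ ≤ M * ‖w‖ ^ twoStar := by nlinarith [norm_nonneg (fderiv ℝ f u), norm_nonneg w]
    calc ‖f (u + w) - f u - fderiv ℝ f u w‖
        ≤ ‖f (u + w) - f u‖ + ‖fderiv ℝ f u w‖ := norm_sub_le _ _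
      _ ≤ ‖f (u + w)‖ + ‖f u‖ + ‖fderiv ℝ f u w‖ := by
          linarith [norm_sub_le (f (u + w)) (f u)]
      _ ≤ (C * (R + 1) ^ q + C * R ^ q + M) * ‖w‖ ^ twoStar := by linarith
      _ ≤ CR * (‖w‖ ^ 2 + ‖w‖ ^ twoStar) := by nlinarith [sq_nonneg ‖w‖]
end

section
/- Let d ≥ 3 and set 2* = 2d/(d−2). Let F : [0,∞) → ℝ be smooth, define f(z) = z·F'(|z|²/2) for z ∈ ℂ, and assume there exist C > 0 and q with 1 ≤ q < 2* such that |f(z)| ≤ C|z|^q for all z ∈ ℂ. Then for every R > 0 there exists a constant C(R) > 0 such that for all u, w ∈ ℂ with |u| ≤ R one has |Re( (f(u) − f(u+w))·conj(i w) )| ≤ C(R)·( |w|² + |w|^{2*} ). -/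
open Complex
set_option maxHeartbeats 800000

/-- estimate (3.21). Let `d ≥ 3`, `2* = 2d/(d-2)`, let `F : [0,∞) → ℝ` be
smooth, and let `f z = z · F'(|z|²/2)` satisfy `|f z| ≤ C |z|^q` for some `C > 0` and
`1 ≤ q < 2*`. Then for every `R > 0` there is `C(R) > 0` such that whenever `|u| ≤ R`,
`|Re ((f u - f (u+w)) · conj (i w))| ≤ C(R) (|w|² + |w|^{2*})`. -/
theorem statement15 (d : ℕ) (hd : 3 ≤ d) (twoStar : ℝ)
    (htwoStar : twoStar = 2 * (d : ℝ) / ((d : ℝ) - 2))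
    (F : ℝ → ℝ) (hF : ContDiffOn ℝ (⊤ : ℕ∞) F (Set.Ici 0))
    (f : ℂ → ℂ)
    (hf : ∀ z : ℂ, f z = z * ((derivWithin F (Set.Ici 0) (‖z‖ ^ 2 / 2) : ℝ) : ℂ))
    (C q : ℝ) (hC : 0 < C) (hq1 : 1 ≤ q) (hq2 : q < twoStar)
    (hgrowth : ∀ z : ℂ, ‖f z‖ ≤ C * ‖z‖ ^ q) :
    ∀ R : ℝ, 0 < R → ∃ CR : ℝ, 0 < CR ∧ ∀ u w : ℂ, ‖u‖ ≤ R →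
      |((f u - f (u + w)) * (starRingEnd ℂ) (Complex.I * w)).re|
        ≤ CR * (‖w‖ ^ 2 + ‖w‖ ^ twoStar) := by
  intro R hR
  have hd3 : (3:ℝ) ≤ (d:ℝ) := by exact_mod_cast hd
  have hts1 : 1 ≤ twoStar := by
    rw [htwoStar, le_div_iff₀ (by linarith)]
    linarith
  -- the smooth function g
  set g : ℝ → ℝ := derivWithin F (Set.Ici 0) with hg_def
  have hg : ContDiffOn ℝ (⊤ : ℕ∞) g (Set.Ici 0) := hF.derivWithin (uniqueDiffOn_Ici 0) (by simp)
  -- bound on derivative of g on a compact interval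
  set M : ℝ := (R+1)^2/2 with hM_def
  set s : Set ℝ := Set.Icc (0:ℝ) M with hs_def
  have hsub : s ⊆ Set.Ici 0 := Set.Icc_subset_Ici_self
  have hg' : ContinuousOn (derivWithin g (Set.Ici 0)) (Set.Ici 0) :=
    (hg.derivWithin (m := 1) (uniqueDiffOn_Ici 0) (WithTop.coe_le_coe.mpr le_top)).continuousOn
  obtain ⟨L, hL⟩ := (isCompact_Icc (a := (0:ℝ)) (b := M)).exists_bound_of_continuousOn
    (hg'.mono hsub)
  set L' : ℝ := max L 0 with hL'_def
  have hL'0 : (0:ℝ) ≤ L' := le_max_right _ _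
  -- Lipschitz bound on s
  have key : ∀ x ∈ s, ∀ y ∈ s, |g y - g x| ≤ L' * |y - x| := by
    intro x hx y hy
    have := Convex.norm_image_sub_le_of_norm_hasDerivWithin_le
      (f := g) (f' := derivWithin g (Set.Ici 0)) (s := s) (C := L')
      (fun z hz => ((hg.differentiableOn (by simp) z (hsub hz)).hasDerivWithinAt).mono hsub)
      (fun z hz => le_trans (hL z hz) (le_max_left _ _)) (convex_Icc _ _) hx hy
    simpa [Real.norm_eq_abs] using this
  -- nonnegativity facts for constants
  have hRq : (0:ℝ) ≤ R ^ q := Real.rpow_nonneg (le_of_lt hR) q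
  have hR1q : (0:ℝ) ≤ (R+1) ^ q := Real.rpow_nonneg (by linarith) q
  have hc1 : (0:ℝ) ≤ R * L' * (2*R+1) :=
    mul_nonneg (mul_nonneg hR.le hL'0) (by linarith)
  have hc2 : (0:ℝ) ≤ C * R ^ q := mul_nonneg hC.le hRq
  have hc3 : (0:ℝ) ≤ C * (R+1) ^ q * R := mul_nonneg (mul_nonneg hC.le hR1q) hR.le
  refine ⟨R * L' * (2*R+1) + (C * R ^ q + C * (R+1) ^ q * R) + 1, by linarith, ?_⟩
  intro u w hu
  have habs : ∀ z : ℂ, |z.re| ≤ ‖z‖ := fun z => by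
    exact Complex.abs_re_le_norm z
  have hwn : (0:ℝ) ≤ ‖w‖ := norm_nonneg w
  have hwts : (0:ℝ) ≤ ‖w‖ ^ twoStar := Real.rpow_nonneg hwn _
  have hw2 : (0:ℝ) ≤ ‖w‖ ^ 2 := sq_nonneg _
  -- the cancellation lemma
  have zero_re : ∀ (z : ℂ) (c : ℝ), ((z * (c:ℂ)) * (starRingEnd ℂ) (I * z)).re = 0 := by
    intro z c
    simp [Complex.mul_re, Complex.mul_im]
    ring
  rcases le_or_gt ‖w‖ 1 with hw | hw
  · -- small w : Lipschitz estimate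
    have hun2 : ‖u‖ ^ 2 ≤ R ^ 2 := pow_le_pow_left₀ (norm_nonneg u) hu 2
    have huw : ‖u+w‖ ≤ R + 1 := le_trans (norm_add_le u w) (by linarith)
    have huw2 : ‖u+w‖ ^ 2 ≤ (R+1) ^ 2 := pow_le_pow_left₀ (norm_nonneg (u+w)) huw 2
    set av : ℝ := g (‖u‖ ^ 2 / 2) with ha_def
    set bv : ℝ := g (‖u+w‖ ^ 2 / 2) with hb_def
    have hfu : f u = u * ((av : ℝ) : ℂ) := hf u
    have hfw : f (u+w) = (u+w) * ((bv : ℝ) : ℂ) := hf (u+w)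
    have hdecomp2 : f u - f (u+w) = u * (((av - bv : ℝ)):ℂ) - w * ((bv:ℝ):ℂ) := by
      rw [hfu, hfw, Complex.ofReal_sub]; ring
    have hre : ((f u - f (u+w)) * (starRingEnd ℂ) (I * w)).re
        = ((u * (((av - bv : ℝ)):ℂ)) * (starRingEnd ℂ) (I * w)).re := by
      rw [hdecomp2, sub_mul, Complex.sub_re, zero_re w bv, sub_zero]
    have hmem1 : ‖u‖ ^ 2 / 2 ∈ s := ⟨by positivity, by rw [hM_def]; linarith⟩
    have hmem2 : ‖u+w‖ ^ 2 / 2 ∈ s := ⟨by positivity, by rw [hM_def]; linarith⟩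
    have hab : |av - bv| ≤ L' * ((2*R+1) * ‖w‖) := by
      have h1 := key _ hmem2 _ hmem1
      have h2 : |‖u‖ - ‖u+w‖| ≤ ‖w‖ := by
        refine (abs_norm_sub_norm_le u (u+w)).trans ?_
        simp
      have h3 : |‖u‖ ^ 2 / 2 - ‖u+w‖ ^ 2 / 2| ≤ (2*R+1) * ‖w‖ := by
        have he : ‖u‖ ^ 2 / 2 - ‖u+w‖ ^ 2 / 2 = (‖u‖ - ‖u+w‖) * ((‖u‖ + ‖u+w‖)/2) := by
          ring
        rw [he, abs_mul]
        have hsumnn : (0:ℝ) ≤ (‖u‖ + ‖u+w‖)/2 := by positivity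
        rw [_root_.abs_of_nonneg hsumnn]
        have hsum : (‖u‖ + ‖u+w‖)/2 ≤ 2*R+1 := by linarith
        calc |‖u‖ - ‖u+w‖| * ((‖u‖ + ‖u+w‖)/2) ≤ ‖w‖ * (2*R+1) :=
              mul_le_mul h2 hsum hsumnn hwn
          _ = (2*R+1) * ‖w‖ := mul_comm _ _
      calc |av - bv| ≤ L' * |‖u‖ ^ 2 / 2 - ‖u+w‖ ^ 2 / 2| := h1
        _ ≤ L' * ((2*R+1) * ‖w‖) := mul_le_mul_of_nonneg_left h3 hL'0
    have hnorm : |((u * (((av - bv : ℝ)):ℂ)) * (starRingEnd ℂ) (I * w)).re|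
        ≤ ‖u‖ * |av - bv| * ‖w‖ := by
      refine (habs _).trans ?_
      rw [norm_mul, norm_mul, Complex.norm_real, Real.norm_eq_abs]
      simp [RCLike.norm_conj]
    have hEb : |((f u - f (u+w)) * (starRingEnd ℂ) (I * w)).re|
        ≤ R * L' * (2*R+1) * ‖w‖ ^ 2 := by
      rw [hre]
      refine hnorm.trans ?_
      have h4 : ‖u‖ * |av - bv| * ‖w‖ ≤ R * (L' * ((2*R+1) * ‖w‖)) * ‖w‖ := by
        refine mul_le_mul (mul_le_mul hu hab (abs_nonneg _) hR.le) (le_refl ‖w‖) hwn ?_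
        exact mul_nonneg hR.le (mul_nonneg hL'0 (mul_nonneg (by linarith) hwn))
      nlinarith
    nlinarith
  · -- large w : growth estimate with cancellation
    set bv : ℝ := g (‖u+w‖ ^ 2 / 2) with hb_def
    have hfw : f (u+w) = (u+w) * ((bv:ℝ):ℂ) := hf (u+w)
    have hre : ((f u - f (u+w)) * (starRingEnd ℂ) (I * w)).re
        = (f u * (starRingEnd ℂ) (I * w)).re + (f (u+w) * (starRingEnd ℂ) (I * u)).re := by
      have hc : (f u - f (u+w)) * (starRingEnd ℂ) (I * w)
          = f u * (starRingEnd ℂ) (I * w)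
            - (f (u+w)) * (starRingEnd ℂ) (I * (u+w))
            + (f (u+w)) * (starRingEnd ℂ) (I * u) := by
        have hcw : (starRingEnd ℂ) (I * w)
            = (starRingEnd ℂ) (I * (u+w)) - (starRingEnd ℂ) (I * u) := by
          rw [← map_sub]; ring_nf
        rw [hcw]; ring
      rw [hc, Complex.add_re, Complex.sub_re, hfw, zero_re (u+w) bv, sub_zero]
    have h1 : |(f u * (starRingEnd ℂ) (I * w)).re| ≤ C * R ^ q * ‖w‖ := by
      refine (habs _).trans ?_
      rw [norm_mul]
      have hce : ‖(starRingEnd ℂ) (I * w)‖ = ‖w‖ := by simp [RCLike.norm_conj]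
      rw [hce]
      refine mul_le_mul_of_nonneg_right ((hgrowth u).trans ?_) hwn
      have : ‖u‖ ^ q ≤ R ^ q := Real.rpow_le_rpow (norm_nonneg u) hu (by linarith)
      nlinarith
    have h2 : |(f (u+w) * (starRingEnd ℂ) (I * u)).re| ≤ C * (R+1) ^ q * ‖w‖ ^ q * R := by
      refine (habs _).trans ?_
      rw [norm_mul]
      have hcu : ‖(starRingEnd ℂ) (I * u)‖ = ‖u‖ := by simp [RCLike.norm_conj]
      rw [hcu]
      have hbound : ‖f (u+w)‖ ≤ C * (R+1) ^ q * ‖w‖ ^ q := by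
        refine (hgrowth (u+w)).trans ?_
        have huw : ‖u+w‖ ≤ (R+1) * ‖w‖ := by
          refine (norm_add_le u w).trans ?_
          nlinarith
        have hle : ‖u+w‖ ^ q ≤ ((R+1) * ‖w‖) ^ q :=
          Real.rpow_le_rpow (norm_nonneg _) huw (by linarith)
        rw [Real.mul_rpow (by linarith) hwn] at hle
        nlinarith
      calc ‖f (u+w)‖ * ‖u‖ ≤ (C * (R+1) ^ q * ‖w‖ ^ q) * R := by
            apply mul_le_mul hbound hu (norm_nonneg u)
            positivity
        _ = C * (R+1) ^ q * ‖w‖ ^ q * R := by ring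
    have hwq : ‖w‖ ^ q ≤ ‖w‖ ^ twoStar :=
      Real.rpow_le_rpow_of_exponent_le (le_of_lt hw) (le_of_lt hq2)
    have hw1 : ‖w‖ ≤ ‖w‖ ^ twoStar := by
      nth_rewrite 1 [← Real.rpow_one ‖w‖]
      exact Real.rpow_le_rpow_of_exponent_le (le_of_lt hw) hts1
    have hwqn : (0:ℝ) ≤ ‖w‖ ^ q := Real.rpow_nonneg hwn q
    rw [hre]
    calc |((f u * (starRingEnd ℂ) (I * w)).re + (f (u+w) * (starRingEnd ℂ) (I * u)).re)|
        ≤ |(f u * (starRingEnd ℂ) (I * w)).re| + |(f (u+w) * (starRingEnd ℂ) (I * u)).re| :=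
          abs_add_le _ _
      _ ≤ C * R ^ q * ‖w‖ + C * (R+1) ^ q * ‖w‖ ^ q * R := add_le_add h1 h2
      _ ≤ (C * R ^ q + C * (R+1) ^ q * R) * ‖w‖ ^ twoStar := by nlinarith
      _ ≤ (R * L' * (2*R+1) + (C * R ^ q + C * (R+1) ^ q * R) + 1) * (‖w‖ ^ 2 + ‖w‖ ^ twoStar) := by
          nlinarith
end

section
/- Let F : ℝ → ℝ be differentiable and let C > 0 satisfy F(s) ≥ −C s² for all s ∈ ℝ. Then for every C' > 2C and every M > 0 there exist r⁺ ≥ M and r⁻ ≤ −M such that r⁺·F'(r⁺) ≥ −C'·(r⁺)² and r⁻·F'(r⁻) ≥ −C'·(r⁻)². In particular there exist sequences r_k⁺ → +∞ and r_k⁻ → −∞ with r_k^±·F'(r_k^±) ≥ −C'·(r_k^±)² for all k. -/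
/-!
With `ε = C'/2 - C > 0`, the function `G s = F s + C'/2 s²` satisfies `G s ≥ ε s²`, so it tends
to `+∞` at both ends. A differentiable function that tends to `+∞` at `+∞` cannot have `G' < 0` on
a whole half-line `[M, ∞)`, and symmetrically at `-∞`. At the points so found,
`r F'(r) + C' r² = r G'(r) ≥ 0`.
-/

open Filter Set

theorem frequently_atTop_deriv_nonneg_of_tendsto {G : ℝ → ℝ} (hG : Differentiable ℝ G)
    (hlim : Tendsto G atTop atTop) : ∃ᶠ r in atTop, 0 ≤ deriv G r := by
  intro hneg
  obtain ⟨M, hM⟩ := eventually_atTop.1 hneg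
  have hanti : AntitoneOn G (Ici M) :=
    antitoneOn_of_deriv_nonpos (convex_Ici M) hG.continuous.continuousOn hG.differentiableOn
      fun r hr => (not_le.1 (hM r (interior_Ici.subset hr).le)).le
  obtain ⟨r, hrM, hGr⟩ := ((eventually_ge_atTop M).and (hlim.eventually_gt_atTop (G M))).exists
  exact (hanti self_mem_Ici hrM hrM).not_gt hGr

theorem frequently_atBot_deriv_nonpos_of_tendsto {G : ℝ → ℝ} (hG : Differentiable ℝ G)
    (hlim : Tendsto G atBot atTop) : ∃ᶠ r in atBot, deriv G r ≤ 0 := by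
  have hreflect := frequently_atTop_deriv_nonneg_of_tendsto (hG.comp differentiable_neg)
    (hlim.comp tendsto_neg_atTop_atBot)
  refine tendsto_neg_atTop_atBot.frequently (hreflect.mono fun r hr => ?_)
  rw [Function.comp_def, deriv_comp_neg] at hr
  exact neg_nonneg.1 hr

theorem frequently_mul_deriv_ge_of_ge_neg_mul_sq {F : ℝ → ℝ} (hF : Differentiable ℝ F)
    {C C' : ℝ} (hC' : 2 * C < C') (hlow : ∀ s, -C * s ^ 2 ≤ F s) :
    (∃ᶠ r in atTop, -C' * r ^ 2 ≤ r * deriv F r) ∧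
      ∃ᶠ r in atBot, -C' * r ^ 2 ≤ r * deriv F r := by
  set G : ℝ → ℝ := fun s => F s + C' / 2 * s ^ 2
  have hGderiv : ∀ r, HasDerivAt G (deriv F r + C' * r) r := fun r =>
    ((hF r).hasDerivAt.fun_add ((hasDerivAt_pow 2 r).const_mul (C' / 2))).congr_deriv
      (by norm_num; ring)
  have hGdiff : Differentiable ℝ G := fun r => (hGderiv r).differentiableAt
  have hmul : ∀ r, 0 ≤ r * deriv G r → -C' * r ^ 2 ≤ r * deriv F r := fun r h => by
    rw [(hGderiv r).deriv] at h
    linarith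
  have hε : 0 < C' / 2 - C := by linarith
  have hGlow : ∀ s, (C' / 2 - C) * s ^ 2 ≤ G s := fun s => by
    simp only [G]
    linarith [hlow s]
  have hsq : Tendsto (fun s : ℝ => (C' / 2 - C) * s ^ 2) atTop atTop :=
    (tendsto_pow_atTop two_ne_zero).const_mul_atTop hε
  have hGtop : Tendsto G atTop atTop := tendsto_atTop_mono hGlow hsq
  have hGbot : Tendsto G atBot atTop := by
    refine tendsto_atTop_mono (fun s => ?_) (hsq.comp tendsto_neg_atBot_atTop)
    simpa only [Function.comp_apply, neg_sq] using hGlow s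
  constructor
  · refine ((frequently_atTop_deriv_nonneg_of_tendsto hGdiff hGtop).and_eventually
      (eventually_ge_atTop 0)).mono fun r ⟨hderiv, hr⟩ => ?_
    exact hmul r (mul_nonneg hr hderiv)
  · refine ((frequently_atBot_deriv_nonpos_of_tendsto hGdiff hGbot).and_eventually
      (eventually_le_atBot 0)).mono fun r ⟨hderiv, hr⟩ => ?_
    exact hmul r (mul_nonneg_of_nonpos_of_nonpos hr hderiv)

theorem statement17_general (F : ℝ → ℝ) (hF : Differentiable ℝ F) (C : ℝ)
    (hlow : ∀ s : ℝ, F s ≥ -C * s ^ 2) :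
    ∀ C' : ℝ, 2 * C < C' →
      ((∀ M : ℝ, 0 < M →
          (∃ rp : ℝ, M ≤ rp ∧ rp * deriv F rp ≥ -C' * rp ^ 2) ∧
            ∃ rm : ℝ, rm ≤ -M ∧ rm * deriv F rm ≥ -C' * rm ^ 2) ∧
        (∃ rp : ℕ → ℝ, Tendsto rp atTop atTop ∧
            ∀ k, rp k * deriv F (rp k) ≥ -C' * (rp k) ^ 2) ∧
          ∃ rm : ℕ → ℝ, Tendsto rm atTop atBot ∧
            ∀ k, rm k * deriv F (rm k) ≥ -C' * (rm k) ^ 2) := by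
  intro C' hC'
  obtain ⟨hpos, hneg⟩ := frequently_mul_deriv_ge_of_ge_neg_mul_sq hF hC' hlow
  exact ⟨fun M _ => ⟨frequently_atTop.1 hpos M, frequently_atBot.1 hneg (-M)⟩,
    exists_seq_forall_of_frequently hpos, exists_seq_forall_of_frequently hneg⟩

/-- existence of good truncation levels. If `F` is differentiable and
`F s ≥ -C s²` for all `s`, then for every `C' > 2C` and every `M > 0` there exist
`r⁺ ≥ M` and `r⁻ ≤ -M` with `r^± · F'(r^±) ≥ -C' (r^±)²`; in particular there are
sequences `r_k⁺ → +∞` and `r_k⁻ → -∞` with `r_k^± · F'(r_k^±) ≥ -C' (r_k^±)²`. -/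
theorem statement17 (F : ℝ → ℝ) (hF : Differentiable ℝ F) (C : ℝ) (hC : 0 < C)
    (hlow : ∀ s : ℝ, F s ≥ -C * s ^ 2) :
    ∀ C' : ℝ, 2 * C < C' →
      ((∀ M : ℝ, 0 < M →
          (∃ rp : ℝ, M ≤ rp ∧ rp * deriv F rp ≥ -C' * rp ^ 2) ∧
            ∃ rm : ℝ, rm ≤ -M ∧ rm * deriv F rm ≥ -C' * rm ^ 2) ∧
        (∃ rp : ℕ → ℝ, Tendsto rp atTop atTop ∧
            ∀ k, rp k * deriv F (rp k) ≥ -C' * (rp k) ^ 2) ∧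
          ∃ rm : ℕ → ℝ, Tendsto rm atTop atBot ∧
            ∀ k, rm k * deriv F (rm k) ≥ -C' * (rm k) ^ 2) :=
  statement17_general F hF C hlow
end

section
/- Let f : ℝ → ℝ be continuous, set F(u) = ∫_0^u f(s) ds, and let C > 0 satisfy F(u) ≥ −C u² for all u ∈ ℝ. Let r⁻ < 0 < r⁺ satisfy r⁻·f(r⁻) ≥ −C·(r⁻)² and r⁺·f(r⁺) ≥ −C·(r⁺)². Define the truncated function g : ℝ → ℝ by g(u) = f(r⁻) for u < r⁻, g(u) = f(u) for r⁻ ≤ u ≤ r⁺, and g(u) = f(r⁺) for u > r⁺, and set G(u) = ∫_0^u g(s) ds. Then G(u) ≥ −2C u² for all u ∈ ℝ. -/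
/-- the primitives of the truncated nonlinearities inherit the quadratic
lower bound (estimate (4.1) in the Appendix). Let `f` be continuous with primitive
`F u = ∫_0^u f`, suppose `F u ≥ -C u²` for all `u`, and let `r⁻ < 0 < r⁺` satisfy
`r^± · f(r^±) ≥ -C (r^±)²`. If `g` is the truncation of `f` at levels `r⁻, r⁺` and
`G u = ∫_0^u g`, then `G u ≥ -2C u²` for all `u`. -/
theorem statement18 (f : ℝ → ℝ) (hf : Continuous f) (F : ℝ → ℝ)
    (hF : ∀ u : ℝ, F u = ∫ s in (0 : ℝ)..u, f s)
    (C : ℝ) (hC : 0 < C) (hlow : ∀ u : ℝ, F u ≥ -C * u ^ 2)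
    (rm rp : ℝ) (hrm : rm < 0) (hrp : 0 < rp)
    (hm : rm * f rm ≥ -C * rm ^ 2) (hp : rp * f rp ≥ -C * rp ^ 2)
    (g : ℝ → ℝ)
    (hg : ∀ u : ℝ, g u = if u < rm then f rm else if u ≤ rp then f u else f rp)
    (G : ℝ → ℝ) (hG : ∀ u : ℝ, G u = ∫ s in (0 : ℝ)..u, g s) :
    ∀ u : ℝ, G u ≥ -(2 * C) * u ^ 2 := by
  have hgc : Continuous g := by
    have hge : g = fun u => f (max rm (min u rp)) := by
      funext u
      rw [hg u]
      rcases lt_or_ge u rm with h | h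
      · rw [if_pos h]
        have h1 : min u rp = u := min_eq_left (by linarith)
        rw [h1, max_eq_left (le_of_lt h)]
      · rw [if_neg (not_lt.2 h)]
        rcases le_or_gt u rp with h2 | h2
        · rw [if_pos h2, min_eq_left h2, max_eq_right h]
        · rw [if_neg (not_le.2 h2), min_eq_right (le_of_lt h2),
            max_eq_right (by linarith : rm ≤ rp)]
    rw [hge]
    exact hf.comp (continuous_const.max (continuous_id.min continuous_const))
  have hfp : f rp ≥ -C * rp := by nlinarith
  have hfm : f rm ≤ -C * rm := by nlinarith
  intro u
  rw [hG u]
  rcases lt_or_ge u rm with h1 | h1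
  · -- u < rm
    have hsplit : (∫ s in (0:ℝ)..rm, g s) + (∫ s in rm..u, g s) = ∫ s in (0:ℝ)..u, g s :=
      intervalIntegral.integral_add_adjacent_intervals
        (hgc.intervalIntegrable _ _) (hgc.intervalIntegrable _ _)
    have hI1 : (∫ s in (0:ℝ)..rm, g s) = F rm := by
      rw [hF rm]
      apply intervalIntegral.integral_congr
      intro s hs
      rw [Set.uIcc_of_ge (le_of_lt hrm)] at hs
      rw [hg s]
      rcases lt_or_ge s rm with h | h
      · exact absurd hs.1 (not_le.2 h)
      · rw [if_neg (not_lt.2 h), if_pos (by linarith [hs.2] : s ≤ rp)]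
    have hI2 : (∫ s in rm..u, g s) = (u - rm) * f rm := by
      have : (∫ s in rm..u, g s) = ∫ _s in rm..u, f rm := by
        apply intervalIntegral.integral_congr
        intro s hs
        rw [Set.uIcc_of_ge (le_of_lt h1)] at hs
        rw [hg s]
        rcases lt_or_ge s rm with h | h
        · rw [if_pos h]
        · have : s = rm := le_antisymm hs.2 h
          rw [if_neg (not_lt.2 h), if_pos (by linarith : s ≤ rp), this]
      rw [this, intervalIntegral.integral_const, smul_eq_mul]
    rw [← hsplit, hI1, hI2]
    have key : (u - rm) * (f rm + C * rm) ≥ 0 :=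
      mul_nonneg_of_nonpos_of_nonpos (by linarith) (by linarith)
    have h0 : C * (-u) * (rm - u) ≥ 0 :=
      mul_nonneg (mul_nonneg hC.le (by linarith)) (by linarith)
    nlinarith [hlow rm, mul_nonneg hC.le (sq_nonneg u)]
  · rcases le_or_gt u rp with h2 | h2
    · -- rm ≤ u ≤ rp
      have : (∫ s in (0:ℝ)..u, g s) = F u := by
        rw [hF u]
        apply intervalIntegral.integral_congr
        intro s hs
        have hs' : rm ≤ s ∧ s ≤ rp := by
          rcases Set.mem_uIcc.1 hs with h | h
          · exact ⟨by linarith [h.1], by linarith [h.2]⟩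
          · exact ⟨by linarith [h.1], by linarith [h.2]⟩
        rw [hg s, if_neg (not_lt.2 hs'.1), if_pos hs'.2]
      rw [this]
      nlinarith [hlow u, mul_nonneg hC.le (sq_nonneg u)]
    · -- u > rp
      have hsplit : (∫ s in (0:ℝ)..rp, g s) + (∫ s in rp..u, g s) = ∫ s in (0:ℝ)..u, g s :=
        intervalIntegral.integral_add_adjacent_intervals
          (hgc.intervalIntegrable _ _) (hgc.intervalIntegrable _ _)
      have hI1 : (∫ s in (0:ℝ)..rp, g s) = F rp := by
        rw [hF rp]
        apply intervalIntegral.integral_congr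
        intro s hs
        rw [Set.uIcc_of_le (le_of_lt hrp)] at hs
        rw [hg s, if_neg (not_lt.2 (by linarith [hs.1] : rm ≤ s)), if_pos hs.2]
      have hI2 : (∫ s in rp..u, g s) = (u - rp) * f rp := by
        have : (∫ s in rp..u, g s) = ∫ _s in rp..u, f rp := by
          apply intervalIntegral.integral_congr
          intro s hs
          rw [Set.uIcc_of_le (le_of_lt h2)] at hs
          rw [hg s, if_neg (not_lt.2 (by linarith [hs.1] : rm ≤ s))]
          rcases le_or_gt s rp with h | h
          · have : s = rp := le_antisymm h hs.1
            rw [if_pos h, this]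
          · rw [if_neg (not_le.2 h)]
        rw [this, intervalIntegral.integral_const, smul_eq_mul]
      rw [← hsplit, hI1, hI2]
      have key : (u - rp) * (f rp + C * rp) ≥ 0 :=
        mul_nonneg (by linarith) (by linarith)
      have h0 : C * u * (u - rp) ≥ 0 :=
        mul_nonneg (mul_nonneg hC.le (by linarith)) (by linarith)
      nlinarith [hlow rp, mul_nonneg hC.le (sq_nonneg u)]
end
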